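/- arXiv:2109.08907 — 6 statements merged into one kernel-verified Lean document; each statement's English description precedes it below -/
import Mathlib

section
/- For all real numbers β > 0, α > 1, and t ∈ ℝ, the integral over ℝ of f₀(x)^α · f_t(x)^(1−α) dx equals (α/(2α−1))·exp((α−1)·|t|/β) + ((α−1)/(2α−1))·exp(−α·|t|/β), where f_μ(x) = (1/(2β))·exp(−|x−μ|/β). -/
open MeasureTheory Real Set

private lemma lap_core (α s : ℝ) (hα : 1 < α) (hs : 0 ≤ s) :
    ∫ y : ℝ, Real.exp (-(α * |y| + (1 - α) * |y - s|)) =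
      2 * α / (2 * α - 1) * Real.exp ((α - 1) * s) +
        2 * (α - 1) / (2 * α - 1) * Real.exp (-α * s) := by
  have h2α : 0 < 2 * α - 1 := by linarith
  have hne : 2 * α - 1 ≠ 0 := ne_of_gt h2α
  set f : ℝ → ℝ := fun y => Real.exp (-(α * |y| + (1 - α) * |y - s|)) with hf
  have hEq1 : EqOn f (fun y => Real.exp ((α - 1) * s) * Real.exp y) (Iic 0) := by
    intro y hy
    simp only [mem_Iic] at hy
    simp only [hf, ← Real.exp_add, Real.exp_eq_exp,
      abs_of_nonpos hy, abs_of_nonpos (by linarith : y - s ≤ 0)]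
    ring
  have hEq2 : EqOn f
      (fun y => Real.exp ((α - 1) * s) * Real.exp (-(2 * α - 1) * y)) (Ioc 0 s) := by
    rintro y ⟨hy0, hys⟩
    simp only [hf, ← Real.exp_add, Real.exp_eq_exp,
      abs_of_pos hy0, abs_of_nonpos (by linarith : y - s ≤ 0)]
    ring
  have hEq3 : EqOn f (fun y => Real.exp ((1 - α) * s) * Real.exp (-y)) (Ioi s) := by
    intro y hy
    simp only [mem_Ioi] at hy
    simp only [hf, ← Real.exp_add, Real.exp_eq_exp,
      abs_of_pos (lt_of_le_of_lt hs hy), abs_of_pos (by linarith : (0:ℝ) < y - s)]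
    ring
  have hI1 : IntegrableOn f (Iic 0) :=
    MeasureTheory.IntegrableOn.congr_fun
      ((integrableOn_exp_Iic 0).const_mul (Real.exp ((α - 1) * s)))
      hEq1.symm measurableSet_Iic
  have hcont : Continuous f := by fun_prop
  have hI2 : IntegrableOn f (Ioc 0 s) := hcont.integrableOn_Ioc
  have hI3 : IntegrableOn f (Ioi s) := by
    have h := ((exp_neg_integrableOn_Ioi s one_pos).const_mul
      (Real.exp ((1 - α) * s)))
    refine MeasureTheory.IntegrableOn.congr_fun h ?_ measurableSet_Ioi
    intro y hy
    rw [hEq3 hy]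
    simp [neg_one_mul]
  have hInt : Integrable f := by
    rw [← integrableOn_univ]
    have hu : (univ : Set ℝ) = Iic 0 ∪ (Ioc 0 s ∪ Ioi s) := by
      rw [Ioc_union_Ioi_eq_Ioi hs, Iic_union_Ioi]
    rw [hu]
    exact hI1.union (hI2.union hI3)
  have h23 : ∫ y in Ioi 0, f y = (∫ y in Ioc 0 s, f y) + ∫ y in Ioi s, f y := by
    rw [← setIntegral_union Ioc_disjoint_Ioi_same measurableSet_Ioi hI2 hI3,
        Ioc_union_Ioi_eq_Ioi hs]
  have htot : (∫ y in Iic 0, f y) + ∫ y in Ioi 0, f y = ∫ y, f y :=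
    intervalIntegral.integral_Iic_add_Ioi hI1 hInt.integrableOn
  have e1 : ∫ y in Iic 0, f y = Real.exp ((α - 1) * s) := by
    rw [setIntegral_congr_fun measurableSet_Iic hEq1, integral_const_mul, integral_exp_Iic]
    simp
  have e3 : ∫ y in Ioi s, f y = Real.exp (-α * s) := by
    rw [setIntegral_congr_fun measurableSet_Ioi hEq3, integral_const_mul,
      integral_exp_neg_Ioi, ← Real.exp_add, Real.exp_eq_exp]
    ring
  have e2 : ∫ y in Ioc 0 s, f y =
      Real.exp ((α - 1) * s) * ((1 - Real.exp (-(2 * α - 1) * s)) / (2 * α - 1)) := by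
    rw [setIntegral_congr_fun measurableSet_Ioc hEq2,
        ← intervalIntegral.integral_of_le hs, intervalIntegral.integral_const_mul]
    congr 1
    rw [intervalIntegral.integral_comp_mul_left Real.exp (by linarith : -(2*α-1) ≠ 0),
        integral_exp]
    rw [smul_eq_mul, mul_zero, Real.exp_zero]
    set X := Real.exp (-(2 * α - 1) * s) with hX
    rw [eq_div_iff hne, inv_neg]
    linear_combination (1 - X) * inv_mul_cancel₀ hne
  have hE : Real.exp ((α-1)*s) * Real.exp (-(2*α-1)*s) = Real.exp (-α*s) := by
    rw [← Real.exp_add, Real.exp_eq_exp]; ring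
  set A := Real.exp ((α - 1) * s) with hA
  set B := Real.exp (-α * s) with hB
  set C := Real.exp (-(2 * α - 1) * s) with hC
  rw [← htot, h23, e1, e2, e3]
  field_simp [hne]
  linear_combination -hE

/-- Rényi integral between two Laplace densities with scale `β`, centers `0` and `t`:
`∫ f₀^α · f_t^(1-α) = (α/(2α-1))·e^((α-1)|t|/β) + ((α-1)/(2α-1))·e^(-α|t|/β)`. -/
theorem laplace_renyi_integral (β α t : ℝ) (hβ : 0 < β) (hα : 1 < α) :
    ∫ x : ℝ,
        ((1 / (2 * β)) * Real.exp (-|x - 0| / β)) ^ α *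
          ((1 / (2 * β)) * Real.exp (-|x - t| / β)) ^ (1 - α)
      = (α / (2 * α - 1)) * Real.exp ((α - 1) * |t| / β) +
        ((α - 1) / (2 * α - 1)) * Real.exp (-α * |t| / β) := by
  have hc : (0:ℝ) < 1 / (2 * β) := by positivity
  have key : ∀ x : ℝ,
      ((1 / (2 * β)) * Real.exp (-|x - 0| / β)) ^ α *
          ((1 / (2 * β)) * Real.exp (-|x - t| / β)) ^ (1 - α)
        = (1 / (2 * β)) *
            Real.exp (-(α * |x / β| + (1 - α) * |x / β - t / β|)) := by
    intro x
    have h1 : |x / β| = |x - 0| / β := by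
      rw [sub_zero, abs_div, abs_of_pos hβ]
    have h2 : |x / β - t / β| = |x - t| / β := by
      rw [div_sub_div_same, abs_div, abs_of_pos hβ]
    rw [Real.mul_rpow hc.le (Real.exp_pos _).le,
        Real.mul_rpow hc.le (Real.exp_pos _).le,
        ← Real.exp_mul, ← Real.exp_mul]
    calc (1 / (2 * β)) ^ α * Real.exp (-|x - 0| / β * α) *
          ((1 / (2 * β)) ^ (1 - α) * Real.exp (-|x - t| / β * (1 - α)))
        = ((1 / (2 * β)) ^ α * (1 / (2 * β)) ^ (1 - α)) *
            Real.exp (-|x - 0| / β * α + -|x - t| / β * (1 - α)) := by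
          rw [Real.exp_add]; ring
      _ = (1 / (2 * β)) *
            Real.exp (-(α * |x / β| + (1 - α) * |x / β - t / β|)) := by
          have hone : α + (1 - α) = 1 := by ring
          rw [← Real.rpow_add hc, hone, Real.rpow_one, h1, h2]
          congr 1
          ring
  simp only [key]
  rw [MeasureTheory.integral_const_mul]
  have hsub : (∫ x : ℝ, Real.exp (-(α * |x / β| + (1 - α) * |x / β - t / β|)))
      = |β| • ∫ y : ℝ, Real.exp (-(α * |y| + (1 - α) * |y - t / β|)) :=
    MeasureTheory.Measure.integral_comp_div
      (fun y => Real.exp (-(α * |y| + (1 - α) * |y - t / β|))) β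
  rw [hsub, abs_of_pos hβ, smul_eq_mul]
  have habs : (∫ y : ℝ, Real.exp (-(α * |y| + (1 - α) * |y - t / β|)))
      = ∫ y : ℝ, Real.exp (-(α * |y| + (1 - α) * |y - |t| / β|)) := by
    rcases abs_cases t with ⟨h, _⟩ | ⟨h, _⟩
    · rw [h]
    · calc (∫ y : ℝ, Real.exp (-(α * |y| + (1 - α) * |y - t / β|)))
          = ∫ y : ℝ, Real.exp (-(α * |(-y)| + (1 - α) * |(-y) - |t| / β|)) := by
            congr 1; funext y
            rw [abs_neg, h, Real.exp_eq_exp]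
            have : |-y - -t / β| = |y - t / β| := by
              rw [show -y - -t / β = -(y - t / β) by ring, abs_neg]
            rw [this]
        _ = ∫ y : ℝ, Real.exp (-(α * |y| + (1 - α) * |y - |t| / β|)) :=
            integral_neg_eq_self
              (f := fun y => Real.exp (-(α * |y| + (1 - α) * |y - |t| / β|))) _
  rw [habs, lap_core α (|t| / β) hα (by positivity)]
  have hne : 2 * α - 1 ≠ 0 := by intro h; nlinarith
  have ht1 : (α - 1) * (|t| / β) = (α - 1) * |t| / β := by ring
  have ht2 : -α * (|t| / β) = -α * |t| / β := by ring
  rw [ht1, ht2]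
  field_simp
end

section
/- For all real β > 0, the integral over ℝ of f₀(x)²/f₁(x) dx equals (2/3)·exp(1/β) + (1/3)·exp(−2/β), where f_μ(x) = (1/(2β))·exp(−|x−μ|/β). -/
open MeasureTheory Real Set Filter

/-- Key improper integral: `∫ x in Ioi a, (1/(2β)) e^((d-x)/β) = (1/2) e^((d-a)/β)`,
together with integrability. -/
lemma laplace_aux_Ioi (β : ℝ) (hβ : 0 < β) (a d : ℝ) :
    IntegrableOn (fun x : ℝ => (1 / (2 * β)) * Real.exp ((d - x) / β)) (Ioi a) ∧
      ∫ x in Ioi a, (1 / (2 * β)) * Real.exp ((d - x) / β)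
        = (1 / 2) * Real.exp ((d - a) / β) := by
  have hderiv : ∀ x ∈ Ici a, HasDerivAt (fun x : ℝ => -(1 / 2) * Real.exp ((d - x) / β))
      ((1 / (2 * β)) * Real.exp ((d - x) / β)) x := by
    intro x _
    have h1 : HasDerivAt (fun x : ℝ => (d - x) / β) (-1 / β) x := by
      simpa using ((hasDerivAt_id x).const_sub d).div_const β
    have h2 := (h1.exp).const_mul (-(1 / 2) : ℝ)
    refine h2.congr_deriv ?_
    field_simp
  have htend : Tendsto (fun x : ℝ => -(1 / 2) * Real.exp ((d - x) / β)) atTop (nhds 0) := by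
    have h0 : Tendsto (fun x : ℝ => d + -x) atTop atBot :=
      tendsto_atBot_add_const_left _ d tendsto_neg_atTop_atBot
    have h1 : Tendsto (fun x : ℝ => (d - x) / β) atTop atBot := by
      refine Tendsto.atBot_div_const hβ ?_
      exact h0.congr fun x => (sub_eq_add_neg d x).symm
    have h2 := (Real.tendsto_exp_atBot.comp h1).const_mul (-(1 / 2) : ℝ)
    simpa using h2
  have hpos : ∀ x ∈ Ioi a, 0 ≤ (1 / (2 * β)) * Real.exp ((d - x) / β) :=
    fun x _ => by positivity
  refine ⟨integrableOn_Ioi_deriv_of_nonneg' hderiv hpos htend, ?_⟩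
  rw [integral_Ioi_of_hasDerivAt_of_nonneg' hderiv hpos htend]
  ring

/-- Order-2 Rényi integral of Laplace densities with scale `β`, centers `0` and `1`:
`∫ f₀²/f₁ = (2/3)·e^(1/β) + (1/3)·e^(-2/β)`. -/
theorem laplace_renyi_two_integral (β : ℝ) (hβ : 0 < β) :
    ∫ x : ℝ,
        ((1 / (2 * β)) * Real.exp (-|x - 0| / β)) ^ 2 /
          ((1 / (2 * β)) * Real.exp (-|x - 1| / β))
      = (2 / 3) * Real.exp (1 / β) + (1 / 3) * Real.exp (-2 / β) := by
  set g : ℝ → ℝ := fun x => (1 / (2 * β)) * Real.exp ((|x - 1| - 2 * |x|) / β) with hg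
  have hβ2 : (2 * β) ≠ 0 := by positivity
  -- pointwise identification of the integrand
  have hint : ∀ x : ℝ, ((1 / (2 * β)) * Real.exp (-|x - 0| / β)) ^ 2 /
      ((1 / (2 * β)) * Real.exp (-|x - 1| / β)) = g x := by
    intro x
    have hE : Real.exp (-|x - 0| / β) ^ 2
        = Real.exp ((|x - 1| - 2 * |x|) / β) * Real.exp (-|x - 1| / β) := by
      rw [sq, ← Real.exp_add, ← Real.exp_add]
      congr 1
      rw [sub_zero]
      ring
    show _ = (1 / (2 * β)) * Real.exp ((|x - 1| - 2 * |x|) / β)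
    rw [div_eq_iff (by positivity), mul_pow, hE]
    ring
  -- continuity of g
  have hcont : Continuous g := by
    apply continuous_const.mul
    exact Real.continuous_exp.comp
      ((((continuous_id.sub continuous_const).abs.sub
        (continuous_const.mul continuous_abs)).div_const β))
  -- value of g on the pieces
  have hIoi1 : ∀ x ∈ Ioi (1:ℝ), g x = (1 / (2 * β)) * Real.exp ((-1 - x) / β) := by
    intro x hx
    have hx1 : (1:ℝ) < x := hx
    show (1 / (2 * β)) * Real.exp ((|x - 1| - 2 * |x|) / β) = _
    rw [abs_of_nonneg (by linarith : (0:ℝ) ≤ x - 1), abs_of_nonneg (by linarith : (0:ℝ) ≤ x),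
      show (x - 1 - 2 * x) / β = (-1 - x) / β from by ring]
  have hIic0 : ∀ x : ℝ, x ≤ 0 → g x = (1 / (2 * β)) * Real.exp ((1 + x) / β) := by
    intro x hx
    show (1 / (2 * β)) * Real.exp ((|x - 1| - 2 * |x|) / β) = _
    rw [abs_of_nonpos (by linarith : x - 1 ≤ 0), abs_of_nonpos hx,
      show (-(x - 1) - 2 * -x) / β = (1 + x) / β from by ring]
  have hIcc : ∀ x ∈ uIcc (0:ℝ) 1, g x = (1 / (2 * β)) * Real.exp ((1 - 3 * x) / β) := by
    intro x hx
    rw [uIcc_of_le zero_le_one] at hx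
    show (1 / (2 * β)) * Real.exp ((|x - 1| - 2 * |x|) / β) = _
    rw [abs_of_nonpos (by linarith [hx.2] : x - 1 ≤ 0), abs_of_nonneg hx.1,
      show (-(x - 1) - 2 * x) / β = (1 - 3 * x) / β from by ring]
  -- the Ioi 1 piece
  obtain ⟨hInt1, hVal1⟩ := laplace_aux_Ioi β hβ 1 (-1)
  have hIntg1 : IntegrableOn g (Ioi 1) :=
    hInt1.congr_fun (fun x hx => (hIoi1 x hx).symm) measurableSet_Ioi
  have hValg1 : ∫ x in Ioi (1:ℝ), g x = (1 / 2) * Real.exp (-2 / β) := by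
    rw [setIntegral_congr_fun measurableSet_Ioi hIoi1, hVal1,
      show (-1 - (1:ℝ)) / β = -2 / β from by ring]
  -- the Iic 0 piece via negation
  obtain ⟨hInt0, hVal0⟩ := laplace_aux_Ioi β hβ 0 1
  have hnegEq : ∀ x ∈ Ioi (0:ℝ), g (-x) = (1 / (2 * β)) * Real.exp ((1 - x) / β) := by
    intro x hx
    rw [hIic0 (-x) (by simp [le_of_lt (mem_Ioi.mp hx)]), show ((1:ℝ) + -x) / β = (1 - x) / β from by ring]
  have hA : MeasurableEmbedding fun x : ℝ => -x :=
    (Homeomorph.neg ℝ).isClosedEmbedding.measurableEmbedding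
  have hIntgneg : IntegrableOn (fun x => g (-x)) (Ioi 0) :=
    hInt0.congr_fun (fun x hx => (hnegEq x hx).symm) measurableSet_Ioi
  have hIntg0 : IntegrableOn g (Iic 0) := by
    rw [← Measure.map_neg_eq_self (volume : Measure ℝ), hA.integrableOn_map_iff]
    have hpre : (fun x : ℝ => -x) ⁻¹' Iic 0 = Ici 0 := by
      ext x; simp
    rw [hpre, integrableOn_Ici_iff_integrableOn_Ioi]
    exact hIntgneg
  have hValg0 : ∫ x in Iic (0:ℝ), g x = (1 / 2) * Real.exp (1 / β) := by
    have h1 : ∫ x in Iic (0:ℝ), g x = ∫ x in Ioi (0:ℝ), g (-x) := by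
      rw [integral_comp_neg_Ioi, neg_zero]
    rw [h1, setIntegral_congr_fun measurableSet_Ioi hnegEq, hVal0,
      show (1 - (0:ℝ)) / β = 1 / β from by ring]
  -- the Ioc 0 1 piece
  have hIntgm : IntegrableOn g (Ioc 0 1) := hcont.integrableOn_Ioc
  have hValgm : ∫ x in Ioc (0:ℝ) 1, g x
      = (1 / 6) * Real.exp (1 / β) - (1 / 6) * Real.exp (-2 / β) := by
    rw [← intervalIntegral.integral_of_le zero_le_one]
    have hderiv : ∀ x ∈ uIcc (0:ℝ) 1,
        HasDerivAt (fun x : ℝ => -(1 / 6) * Real.exp ((1 - 3 * x) / β)) (g x) x := by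
      intro x hx
      rw [hIcc x hx]
      have h1 : HasDerivAt (fun x : ℝ => (1 - 3 * x) / β) (-3 / β) x := by
        simpa using (((hasDerivAt_id x).const_mul (3:ℝ)).const_sub 1).div_const β
      have h2 := (h1.exp).const_mul (-(1 / 6) : ℝ)
      refine h2.congr_deriv ?_
      field_simp
      ring
    rw [intervalIntegral.integral_eq_sub_of_hasDerivAt hderiv
      (hcont.intervalIntegrable 0 1)]
    rw [show (1 - 3 * (1:ℝ)) / β = -2 / β from by ring,
      show (1 - 3 * (0:ℝ)) / β = 1 / β from by ring]
    ring
  -- assemble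
  have hIntgIoi : IntegrableOn g (Ioi 0) := by
    rw [← Ioc_union_Ioi_eq_Ioi (zero_le_one : (0:ℝ) ≤ 1)]
    exact hIntgm.union hIntg1
  have hsplit2 : ∫ x in Ioi (0:ℝ), g x
      = (∫ x in Ioc (0:ℝ) 1, g x) + ∫ x in Ioi (1:ℝ), g x := by
    rw [← Ioc_union_Ioi_eq_Ioi (zero_le_one : (0:ℝ) ≤ 1),
      setIntegral_union Ioc_disjoint_Ioi_same measurableSet_Ioi hIntgm hIntg1]
  calc ∫ x : ℝ, ((1 / (2 * β)) * Real.exp (-|x - 0| / β)) ^ 2 /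
          ((1 / (2 * β)) * Real.exp (-|x - 1| / β))
      = ∫ x : ℝ, g x := integral_congr_ae (Filter.Eventually.of_forall hint)
    _ = (∫ x in Iic (0:ℝ), g x) + ∫ x in Ioi (0:ℝ), g x :=
        (intervalIntegral.integral_Iic_add_Ioi hIntg0 hIntgIoi).symm
    _ = (2 / 3) * Real.exp (1 / β) + (1 / 3) * Real.exp (-2 / β) := by
        rw [hsplit2, hValg0, hValg1, hValgm]; ring
end

section
/- For all real γ with 0 ≤ γ ≤ 1 and all real E with 0 ≤ E ≤ 1, one has log(1 + γ²·(exp(E) − 1)) ≤ 2·γ²·E. -/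
open Real

lemma exp_le_line (E : ℝ) (h0 : 0 ≤ E) (h1 : E ≤ 1) :
    Real.exp E ≤ 1 + (Real.exp 1 - 1) * E := by
  have h := convexOn_exp.2 (Set.mem_univ (0:ℝ)) (Set.mem_univ (1:ℝ))
    (by linarith : (0:ℝ) ≤ 1 - E) h0 (by ring)
  simp only [smul_eq_mul, mul_zero, mul_one, zero_add, Real.exp_zero] at h
  calc Real.exp E ≤ 1 - E + E * Real.exp 1 := h
    _ = 1 + (Real.exp 1 - 1) * E := by ring

/-- Privacy amplification by subsampling: `ε_{M∘Sample_γ}(2) ≤ 2·γ²·ε_M(2)` when `ε_M(2) ≤ 1`. -/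
theorem subsampling_amplification (γ E : ℝ) (hγ0 : 0 ≤ γ) (hγ1 : γ ≤ 1)
    (hE0 : 0 ≤ E) (hE1 : E ≤ 1) :
    Real.log (1 + γ ^ 2 * (Real.exp E - 1)) ≤ 2 * γ ^ 2 * E := by
  have hexp1 : Real.exp E ≥ 1 := by
    rw [ge_iff_le, show (1:ℝ) = Real.exp 0 by simp]
    exact Real.exp_le_exp.2 hE0
  have hγ2 : 0 ≤ γ ^ 2 := sq_nonneg γ
  have hpos : 0 < 1 + γ ^ 2 * (Real.exp E - 1) := by nlinarith
  have hlog := Real.log_le_sub_one_of_pos hpos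
  have hline := exp_le_line E hE0 hE1
  have he : Real.exp 1 ≤ 3 := by
    have := Real.exp_one_lt_d9; linarith
  nlinarith [sq_nonneg γ, mul_nonneg hγ2 hE0]
end

section
/- Let c be a natural number, β > 0 and Δ ≥ 0 real, and u, v : Fin c → ℝ with Σᵢ |u i − v i| ≤ Δ. Then for every measurable set E ⊆ (Fin c → ℝ) (with respect to the product Lebesgue measure), ∫_E ∏ᵢ (1/(2β))·exp(−|x i − u i|/β) dx ≤ exp(Δ/β) · ∫_E ∏ᵢ (1/(2β))·exp(−|x i − v i|/β) dx. -/
open MeasureTheory Real Finset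

lemma integrable_exp_neg_abs_scaled {b : ℝ} (hb : 0 < b) :
    Integrable (fun x : ℝ => Real.exp (-b * |x|)) := by
  have h1 : IntegrableOn (fun x : ℝ => Real.exp (-b * |x|)) (Set.Ioi 0) := by
    apply (exp_neg_integrableOn_Ioi 0 hb).congr_fun ?_ measurableSet_Ioi
    intro x hx
    simp [abs_of_pos (Set.mem_Ioi.mp hx)]
  have h2 : IntegrableOn (fun x : ℝ => Real.exp (-b * |x|)) (Set.Iic 0) := by
    rw [← Measure.map_neg_eq_self (volume : Measure ℝ)]
    have m : MeasurableEmbedding fun x : ℝ => -x := (Homeomorph.neg ℝ).measurableEmbedding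
    rw [m.integrableOn_map_iff]
    simp_rw [Function.comp_def, abs_neg, Set.neg_preimage, Set.neg_Iic, neg_zero]
    exact (integrableOn_Ici_iff_integrableOn_Ioi).mpr h1
  have := h2.union h1
  rwa [Set.Iic_union_Ioi, integrableOn_univ] at this

lemma integrable_laplace_density {β : ℝ} (hβ : 0 < β) (m : ℝ) :
    Integrable (fun x : ℝ => (1 / (2 * β)) * Real.exp (-|x - m| / β)) := by
  have h : Integrable (fun x : ℝ => Real.exp (-(1/β) * |x|)) :=
    integrable_exp_neg_abs_scaled (by positivity)
  have h2 := h.comp_sub_right m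
  apply (h2.const_mul (1 / (2 * β))).congr
  filter_upwards with x
  ring_nf

/-- The `c`-dimensional Laplace mechanism with scale `β` on queries of ℓ1 sensitivity
at most `Δ` is `(Δ/β)`-differentially private (density/integral form). -/
theorem laplace_mechanism_dp (c : ℕ) (β Δ : ℝ) (hβ : 0 < β) (hΔ : 0 ≤ Δ)
    (u v : Fin c → ℝ) (h : ∑ i, |u i - v i| ≤ Δ)
    (E : Set (Fin c → ℝ)) (hE : MeasurableSet E) :
    ∫ x in E, ∏ i, (1 / (2 * β)) * Real.exp (-|x i - u i| / β) ≤
      Real.exp (Δ / β) * ∫ x in E, ∏ i, (1 / (2 * β)) * Real.exp (-|x i - v i| / β) := by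
  rw [← integral_const_mul]
  have hint : Integrable (fun x : Fin c → ℝ =>
      Real.exp (Δ / β) * ∏ i, (1 / (2 * β)) * Real.exp (-|x i - v i| / β)) := by
    exact (Integrable.fintype_prod (f := fun _ (y : ℝ) =>
      (1 / (2 * β)) * Real.exp (-|y - v _| / β))
      (fun i => integrable_laplace_density hβ (v i))).const_mul _
  refine integral_mono_of_nonneg ?_ hint.integrableOn ?_
  · filter_upwards with x
    positivity
  · filter_upwards with x
    calc ∏ i, (1 / (2 * β)) * Real.exp (-|x i - u i| / β)
        = (1 / (2 * β)) ^ c * Real.exp (∑ i, -|x i - u i| / β) := by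
          rw [prod_mul_distrib, prod_const, card_univ, Fintype.card_fin,
            ← Real.exp_sum]
      _ ≤ (1 / (2 * β)) ^ c * Real.exp (Δ / β + ∑ i, -|x i - v i| / β) := by
          apply mul_le_mul_of_nonneg_left _ (by positivity)
          apply Real.exp_le_exp.mpr
          have key : ∀ i, -|x i - u i| / β ≤ |u i - v i| / β + -|x i - v i| / β := by
            intro i
            rw [← add_div, div_le_div_iff_of_pos_right hβ]
            have := abs_sub_abs_le_abs_sub (x i - v i) (x i - u i)
            have h2 : (x i - v i) - (x i - u i) = u i - v i := by ring
            rw [h2] at this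
            linarith
          calc ∑ i, -|x i - u i| / β ≤ ∑ i, (|u i - v i| / β + -|x i - v i| / β) :=
                Finset.sum_le_sum fun i _ => key i
            _ = (∑ i, |u i - v i|) / β + ∑ i, -|x i - v i| / β := by
                rw [Finset.sum_add_distrib, Finset.sum_div]
            _ ≤ Δ / β + ∑ i, -|x i - v i| / β := by
                gcongr
      _ = Real.exp (Δ / β) * ∏ i, (1 / (2 * β)) * Real.exp (-|x i - v i| / β) := by
          rw [Real.exp_add, prod_mul_distrib, prod_const, card_univ, Fintype.card_fin,
            ← Real.exp_sum]
          ring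
end

section
/- For every real β > 0, the function α ↦ (1/(α−1))·log((α/(2α−1))·exp((α−1)/β) + ((α−1)/(2α−1))·exp(−α/β)) tends to 1/β as α → ∞. -/
open Real Filter

private noncomputable def lapG (β α : ℝ) : ℝ :=
  α / (2 * α - 1) + (α - 1) / (2 * α - 1) * Real.exp (-(2 * α - 1) / β)

private lemma lapG_tendsto (β : ℝ) (hβ : 0 < β) :
    Tendsto (lapG β) atTop (nhds (1 / 2)) := by
  have hinv : Tendsto (fun α : ℝ => 1 / α) atTop (nhds 0) := by
    simpa [one_div] using tendsto_inv_atTop_zero (𝕜 := ℝ)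
  have hden : Tendsto (fun α : ℝ => 2 - 1 / α) atTop (nhds 2) := by
    simpa using tendsto_const_nhds.sub hinv
  have hA : Tendsto (fun α : ℝ => α / (2 * α - 1)) atTop (nhds (1 / 2)) := by
    have h : Tendsto (fun α : ℝ => 1 / (2 - 1 / α)) atTop (nhds (1 / 2)) :=
      tendsto_const_nhds.div hden two_ne_zero
    refine h.congr' ?_
    filter_upwards [eventually_gt_atTop (1 : ℝ)] with α hα
    have h0 : α ≠ 0 := by linarith
    have h1 : 2 * α - 1 ≠ 0 := by nlinarith
    field_simp
  have hB : Tendsto (fun α : ℝ => (α - 1) / (2 * α - 1)) atTop (nhds (1 / 2)) := by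
    have h : Tendsto (fun α : ℝ => (1 - 1 / α) / (2 - 1 / α)) atTop (nhds (1 / 2)) := by
      have := ((tendsto_const_nhds (x := (1:ℝ))).sub hinv).div hden two_ne_zero
      norm_num at this
      exact this.congr fun α => by simp [Pi.div_apply, one_div]
    refine h.congr' ?_
    filter_upwards [eventually_gt_atTop (1 : ℝ)] with α hα
    have h0 : α ≠ 0 := by linarith
    have h1 : 2 * α - 1 ≠ 0 := by nlinarith
    field_simp
  have hlin : Tendsto (fun α : ℝ => 2 * α - 1) atTop atTop := by
    have := (tendsto_id (α := ℝ)).const_mul_atTop two_pos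
    simpa [sub_eq_add_neg] using tendsto_atTop_add_const_right atTop (-1 : ℝ) this
  have hE : Tendsto (fun α : ℝ => Real.exp (-(2 * α - 1) / β)) atTop (nhds 0) := by
    apply Real.tendsto_exp_atBot.comp
    have : Tendsto (fun α : ℝ => -(2 * α - 1)) atTop atBot :=
      tendsto_neg_atTop_atBot.comp hlin
    exact this.atBot_div_const hβ
  have h := hA.add (hB.mul hE)
  norm_num at h
  refine h.congr fun α => ?_
  unfold lapG
  ring_nf

/-- As `α → ∞`, the order-`α` Laplace RDP value tends to the pure DP value `1/β`. -/
theorem laplace_rdp_tendsto_pure_dp (β : ℝ) (hβ : 0 < β) :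
    Filter.Tendsto
      (fun α : ℝ => (1 / (α - 1)) *
        Real.log ((α / (2 * α - 1)) * Real.exp ((α - 1) / β) +
          ((α - 1) / (2 * α - 1)) * Real.exp (-α / β)))
      Filter.atTop (nhds (1 / β)) := by
  have hg := lapG_tendsto β hβ
  have hlog : Tendsto (fun α : ℝ => Real.log (lapG β α)) atTop (nhds (Real.log (1 / 2))) :=
    hg.log (by norm_num)
  have hinv : Tendsto (fun α : ℝ => 1 / (α - 1)) atTop (nhds 0) := by
    have h1 : Tendsto (fun α : ℝ => α - 1) atTop atTop := by
      simpa [sub_eq_add_neg] using tendsto_atTop_add_const_right atTop (-1 : ℝ) tendsto_id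
    simpa [one_div, Function.comp_def] using (tendsto_inv_atTop_zero (𝕜 := ℝ)).comp h1
  have hmain : Tendsto (fun α : ℝ => 1 / β + (1 / (α - 1)) * Real.log (lapG β α))
      atTop (nhds (1 / β)) := by
    have := (tendsto_const_nhds (x := 1/β)).add (hinv.mul hlog)
    simpa using this
  refine hmain.congr' ?_
  filter_upwards [eventually_gt_atTop (1 : ℝ)] with α hα
  have hα1 : α - 1 ≠ 0 := by linarith
  have hden : (0 : ℝ) < 2 * α - 1 := by linarith
  have hgpos : 0 < lapG β α := by
    have h1 : 0 < α / (2 * α - 1) := div_pos (by linarith) hden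
    have h2 : 0 ≤ (α - 1) / (2 * α - 1) * Real.exp (-(2 * α - 1) / β) :=
      mul_nonneg (div_nonneg (by linarith) hden.le) (Real.exp_pos _).le
    unfold lapG; linarith
  have hfac : (α / (2 * α - 1)) * Real.exp ((α - 1) / β) +
      ((α - 1) / (2 * α - 1)) * Real.exp (-α / β)
      = Real.exp ((α - 1) / β) * lapG β α := by
    unfold lapG
    rw [mul_add]
    congr 1
    · ring
    · rw [mul_comm (Real.exp ((α - 1) / β)), mul_assoc, ← Real.exp_add]
      congr 2
      field_simp
      ring
  rw [hfac, Real.log_mul (Real.exp_ne_zero _) hgpos.ne', Real.log_exp, mul_add]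
  have : 1 / (α - 1) * ((α - 1) / β) = 1 / β := by field_simp
  rw [this]
end

section
/- Let P₁, Q₁ be probability measures on a measurable space X and P₂, Q₂ probability measures on a measurable space Y, and let ε₁, ε₂ ≥ 0 be real. Suppose P₁(A) ≤ exp(ε₁)·Q₁(A) for every measurable A ⊆ X, and P₂(B) ≤ exp(ε₂)·Q₂(B) for every measurable B ⊆ Y. Then (P₁ × P₂)(E) ≤ exp(ε₁ + ε₂)·(Q₁ × Q₂)(E) for every measurable E ⊆ X × Y, where × denotes the product measure. -/
open MeasureTheory Real

/-- Sequential composition of pure DP for independent mechanisms, via product measures. -/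
theorem dp_composition_prod {X Y : Type*} [MeasurableSpace X] [MeasurableSpace Y]
    (P₁ Q₁ : Measure X) (P₂ Q₂ : Measure Y)
    [IsProbabilityMeasure P₁] [IsProbabilityMeasure Q₁]
    [IsProbabilityMeasure P₂] [IsProbabilityMeasure Q₂]
    (ε₁ ε₂ : ℝ) (hε₁ : 0 ≤ ε₁) (hε₂ : 0 ≤ ε₂)
    (h₁ : ∀ A : Set X, MeasurableSet A → P₁ A ≤ ENNReal.ofReal (Real.exp ε₁) * Q₁ A)
    (h₂ : ∀ B : Set Y, MeasurableSet B → P₂ B ≤ ENNReal.ofReal (Real.exp ε₂) * Q₂ B)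
    (E : Set (X × Y)) (hE : MeasurableSet E) :
    (P₁.prod P₂) E ≤ ENNReal.ofReal (Real.exp (ε₁ + ε₂)) * (Q₁.prod Q₂) E := by
  have hle : P₁ ≤ (ENNReal.ofReal (Real.exp ε₁)) • Q₁ := by
    rw [Measure.le_iff]
    intro s hs
    simpa using h₁ s hs
  rw [Measure.prod_apply hE, Measure.prod_apply hE, Real.exp_add,
    ENNReal.ofReal_mul (Real.exp_nonneg _)]
  calc ∫⁻ x, P₂ (Prod.mk x ⁻¹' E) ∂P₁
      ≤ ∫⁻ x, ENNReal.ofReal (Real.exp ε₂) * Q₂ (Prod.mk x ⁻¹' E) ∂P₁ :=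
        lintegral_mono fun x => h₂ _ (measurable_prodMk_left hE)
    _ ≤ ∫⁻ x, ENNReal.ofReal (Real.exp ε₂) * Q₂ (Prod.mk x ⁻¹' E)
          ∂((ENNReal.ofReal (Real.exp ε₁)) • Q₁) := lintegral_mono' hle le_rfl
    _ = ENNReal.ofReal (Real.exp ε₁) * ∫⁻ x, ENNReal.ofReal (Real.exp ε₂) *
          Q₂ (Prod.mk x ⁻¹' E) ∂Q₁ := lintegral_smul_measure _ _
    _ = ENNReal.ofReal (Real.exp ε₁) * (ENNReal.ofReal (Real.exp ε₂) *
          ∫⁻ x, Q₂ (Prod.mk x ⁻¹' E) ∂Q₁) := by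
        rw [lintegral_const_mul' _ _ ENNReal.ofReal_ne_top]
    _ = ENNReal.ofReal (Real.exp ε₁) * ENNReal.ofReal (Real.exp ε₂) *
          ∫⁻ x, Q₂ (Prod.mk x ⁻¹' E) ∂Q₁ := by ring
end
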